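/- If T : X →L[𝕜] Y is a Fredholm operator and S : Z →L[𝕜] Y is any continuous linear map between Banach spaces such that S is surjective onto Y modulo the range of T (i.e. range T + range S = Y), then the pullback space P = {(z,x) : S z = T x} with projection to Z is such that the induced map P → Z has Fredholm 'linearized' structure: the kernel of the projection P → Z is isomorphic to ker T and its cokernel embeds in coker T; in particular, if range T + range S = Y then the projection P → Z is Fredholm with index equal to index(T). -/

import Mathlib

/-!
The kernel of the projection `π : P → Z` is `0 × ker T`, and its range is `S⁻¹(range T)`, which is
closed because `range T` is. Hence `S` induces an injection `Z ⧸ range π → Y ⧸ range T`, which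
transversality makes surjective. So `π` has the kernel and cokernel of `T`, up to isomorphism.
-/

variable {𝕜 : Type*} [NontriviallyNormedField 𝕜]

/-- A continuous linear map is Fredholm if its kernel is finite dimensional and its
range is closed with finite dimensional cokernel. -/
def IsFredholm {X Y : Type*} [NormedAddCommGroup X] [NormedSpace 𝕜 X]
    [NormedAddCommGroup Y] [NormedSpace 𝕜 Y] (T : X →L[𝕜] Y) : Prop :=
  FiniteDimensional 𝕜 (LinearMap.ker (T : X →ₗ[𝕜] Y)) ∧ IsClosed (LinearMap.range (T : X →ₗ[𝕜] Y) : Set Y) ∧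
    FiniteDimensional 𝕜 (Y ⧸ LinearMap.range (T : X →ₗ[𝕜] Y))

/-- The Fredholm index: `dim ker T - dim coker T`. -/
noncomputable def fredholmIndex {X Y : Type*} [NormedAddCommGroup X] [NormedSpace 𝕜 X]
    [NormedAddCommGroup Y] [NormedSpace 𝕜 Y] (T : X →L[𝕜] Y) : ℤ :=
  (Module.finrank 𝕜 (LinearMap.ker (T : X →ₗ[𝕜] Y)) : ℤ) - Module.finrank 𝕜 (Y ⧸ LinearMap.range (T : X →ₗ[𝕜] Y))

namespace LinearMap

variable {R X Y Z : Type*} [Ring R] [AddCommGroup X] [Module R X] [AddCommGroup Y] [Module R Y]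
  [AddCommGroup Z] [Module R Z] (S : Z →ₗ[R] Y) (T : X →ₗ[R] Y)

def pullback : Submodule R (Z × X) :=
  ker (S ∘ₗ fst R Z X - T ∘ₗ snd R Z X)

theorem mem_pullback {p : Z × X} : p ∈ pullback S T ↔ S p.1 = T p.2 := by
  simp [pullback, sub_eq_zero]

def pullbackFst : pullback S T →ₗ[R] Z :=
  fst R Z X ∘ₗ (pullback S T).subtype

theorem range_pullbackFst : range (pullbackFst S T) = (range T).comap S := by
  ext z
  constructor
  · rintro ⟨p, rfl⟩
    exact ⟨(p : Z × X).2, ((mem_pullback S T).1 p.2).symm⟩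
  · rintro ⟨x, hx⟩
    exact ⟨⟨(z, x), (mem_pullback S T).2 hx.symm⟩, rfl⟩

def kerPullbackFstEquiv : ker (pullbackFst S T) ≃ₗ[R] ker T where
  toFun p := ⟨(p : Z × X).2, by
    have h := (mem_pullback S T).1 (p : pullback S T).2
    rw [show (p : Z × X).1 = 0 from p.2, map_zero] at h
    exact h.symm⟩
  invFun x := ⟨⟨(0, x), (mem_pullback S T).2 ((map_zero S).trans (mem_ker.1 x.2).symm)⟩, rfl⟩
  map_add' _ _ := rfl
  map_smul' _ _ := rfl
  left_inv := by
    rintro ⟨⟨⟨z, x⟩, _⟩, hz⟩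
    obtain rfl : z = 0 := hz
    rfl
  right_inv _ := rfl

noncomputable def quotRangePullbackFstEquiv (htrans : range T ⊔ range S = ⊤) :
    (Z ⧸ range (pullbackFst S T)) ≃ₗ[R] Y ⧸ range T :=
  (Submodule.quotEquivOfEq _ _ (by rw [ker_comp, Submodule.ker_mkQ, range_pullbackFst])).trans
    (((range T).mkQ ∘ₗ S).quotKerEquivOfSurjective <| by
      rw [← range_eq_top, range_comp, Submodule.map_mkQ_eq_top, htrans])

end LinearMap

section Fredholm

variable {X Y X' Y' : Type*} [NormedAddCommGroup X] [NormedSpace 𝕜 X]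
  [NormedAddCommGroup Y] [NormedSpace 𝕜 Y] [NormedAddCommGroup X'] [NormedSpace 𝕜 X']
  [NormedAddCommGroup Y'] [NormedSpace 𝕜 Y'] {T : X →L[𝕜] Y} {T' : X' →L[𝕜] Y'}

theorem IsFredholm.of_linearEquiv (hT : IsFredholm T)
    (eker : LinearMap.ker (T' : X' →ₗ[𝕜] Y') ≃ₗ[𝕜] LinearMap.ker (T : X →ₗ[𝕜] Y))
    (ecoker : (Y' ⧸ LinearMap.range (T' : X' →ₗ[𝕜] Y')) ≃ₗ[𝕜] Y ⧸ LinearMap.range (T : X →ₗ[𝕜] Y))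
    (hclosed : IsClosed (LinearMap.range (T' : X' →ₗ[𝕜] Y') : Set Y')) : IsFredholm T' :=
  have := hT.1
  have := hT.2.2
  ⟨.equiv eker.symm, hclosed, .equiv ecoker.symm⟩

theorem fredholmIndex_eq_of_linearEquiv
    (eker : LinearMap.ker (T' : X' →ₗ[𝕜] Y') ≃ₗ[𝕜] LinearMap.ker (T : X →ₗ[𝕜] Y))
    (ecoker : (Y' ⧸ LinearMap.range (T' : X' →ₗ[𝕜] Y')) ≃ₗ[𝕜] Y ⧸ LinearMap.range (T : X →ₗ[𝕜] Y)) :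
    fredholmIndex T' = fredholmIndex T := by
  rw [fredholmIndex, fredholmIndex, eker.finrank_eq, ecoker.finrank_eq]

end Fredholm

theorem isFredholm_pullback_general {X Y Z : Type*}
    [NormedAddCommGroup X] [NormedSpace 𝕜 X]
    [NormedAddCommGroup Y] [NormedSpace 𝕜 Y]
    [NormedAddCommGroup Z] [NormedSpace 𝕜 Z]
    (T : X →L[𝕜] Y) (S : Z →L[𝕜] Y) (hT : IsFredholm T)
    (htrans : LinearMap.range (T : X →ₗ[𝕜] Y) ⊔ LinearMap.range (S : Z →ₗ[𝕜] Y) = ⊤)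
    (P : Submodule 𝕜 (Z × X))
    (hP : P = LinearMap.ker (((S.comp (ContinuousLinearMap.fst 𝕜 Z X)) -
      (T.comp (ContinuousLinearMap.snd 𝕜 Z X)) : Z × X →ₗ[𝕜] Y)))
    (π : P →L[𝕜] Z) (hπ : π = (ContinuousLinearMap.fst 𝕜 Z X).comp P.subtypeL) :
    Nonempty ((LinearMap.ker (π : P →ₗ[𝕜] Z)) ≃ₗ[𝕜] (LinearMap.ker (T : X →ₗ[𝕜] Y))) ∧
    (∃ ι : (Z ⧸ LinearMap.range (π : P →ₗ[𝕜] Z)) →ₗ[𝕜] (Y ⧸ LinearMap.range (T : X →ₗ[𝕜] Y)), Function.Injective ι) ∧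
    IsFredholm π ∧ fredholmIndex π = fredholmIndex T := by
  obtain rfl : P = LinearMap.pullback (S : Z →ₗ[𝕜] Y) (T : X →ₗ[𝕜] Y) := hP
  have hπ : (π : _ →ₗ[𝕜] Z) = LinearMap.pullbackFst (S : Z →ₗ[𝕜] Y) (T : X →ₗ[𝕜] Y) := by
    subst hπ; rfl
  have hrange := LinearMap.range_pullbackFst (S : Z →ₗ[𝕜] Y) (T : X →ₗ[𝕜] Y)
  rw [← hπ] at hrange
  have eker := hπ ▸ LinearMap.kerPullbackFstEquiv (S : Z →ₗ[𝕜] Y) (T : X →ₗ[𝕜] Y)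
  have ecoker := hπ ▸ LinearMap.quotRangePullbackFstEquiv (S : Z →ₗ[𝕜] Y) (T : X →ₗ[𝕜] Y) htrans
  have hclosed : IsClosed (LinearMap.range π.toLinearMap : Set Z) := by
    rw [hrange]
    exact hT.2.1.preimage S.continuous
  exact ⟨⟨eker⟩, ⟨ecoker, ecoker.injective⟩, hT.of_linearEquiv eker ecoker hclosed,
    fredholmIndex_eq_of_linearEquiv eker ecoker⟩

/-- Linear pullback of a Fredholm operator along a transverse map: if
`range T + range S = Y`, then on the pullback `P = {(z,x) | S z = T x}` the
projection `π : P → Z` has kernel isomorphic to `ker T`, cokernel embedding into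
`coker T`, and `π` is Fredholm with `index π = index T`. -/
theorem isFredholm_pullback {X Y Z : Type*}
    [NormedAddCommGroup X] [NormedSpace 𝕜 X] [CompleteSpace X]
    [NormedAddCommGroup Y] [NormedSpace 𝕜 Y] [CompleteSpace Y]
    [NormedAddCommGroup Z] [NormedSpace 𝕜 Z] [CompleteSpace Z]
    (T : X →L[𝕜] Y) (S : Z →L[𝕜] Y) (hT : IsFredholm T)
    (htrans : LinearMap.range (T : X →ₗ[𝕜] Y) ⊔ LinearMap.range (S : Z →ₗ[𝕜] Y) = ⊤)
    (P : Submodule 𝕜 (Z × X))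
    (hP : P = LinearMap.ker (((S.comp (ContinuousLinearMap.fst 𝕜 Z X)) -
      (T.comp (ContinuousLinearMap.snd 𝕜 Z X)) : Z × X →ₗ[𝕜] Y)))
    (π : P →L[𝕜] Z) (hπ : π = (ContinuousLinearMap.fst 𝕜 Z X).comp P.subtypeL) :
    Nonempty ((LinearMap.ker (π : P →ₗ[𝕜] Z)) ≃ₗ[𝕜] (LinearMap.ker (T : X →ₗ[𝕜] Y))) ∧
    (∃ ι : (Z ⧸ LinearMap.range (π : P →ₗ[𝕜] Z)) →ₗ[𝕜] (Y ⧸ LinearMap.range (T : X →ₗ[𝕜] Y)), Function.Injective ι) ∧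
    IsFredholm π ∧ fredholmIndex π = fredholmIndex T :=
  isFredholm_pullback_general T S hT htrans P hP π hπ
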